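/- If T' and T are trees with T' a minor of T, then th_+(T') ≤ th_+(T). -/

import Mathlib

open SimpleGraph Set Function

namespace ThrotPaper

variable {V : Type*} {W : Type*} {α : Type*}

/-- One simultaneous round of standard zero forcing: a blue vertex forces its
unique white neighbor. -/
def zfStep (G : SimpleGraph V) (B : Set V) : Set V :=
  B ∪ {w | w ∉ B ∧ ∃ u ∈ B, G.Adj u w ∧ ∀ x, G.Adj u x → x ∉ B → x = w}

/-- `B` is a standard zero forcing set of `G`. -/
def IsZFSet (G : SimpleGraph V) (B : Set V) : Prop :=
  ∃ t, (zfStep G)^[t] B = Set.univ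

/-- Standard propagation time of `B` in `G`. -/
noncomputable def zfPt (G : SimpleGraph V) (B : Set V) : ℕ :=
  sInf {t | (zfStep G)^[t] B = Set.univ}

/-- Standard throttling number of `G`. -/
noncomputable def zfTh (G : SimpleGraph V) : ℕ :=
  sInf {n | ∃ B : Set V, IsZFSet G B ∧ n = B.ncard + zfPt G B}

/-- The set `B^(i)` of vertices newly forced at time step `i ≥ 1`. -/
def newBlue (G : SimpleGraph V) (B : Set V) (i : ℕ) : Set V :=
  (zfStep G)^[i] B \ (zfStep G)^[i - 1] B

/-- `G` contains an induced copy of `X`. -/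
def HasInducedCopy (X : SimpleGraph α) (G : SimpleGraph V) : Prop :=
  ∃ f : α ↪ V, ∀ a b, X.Adj a b ↔ G.Adj (f a) (f b)

/-- The path on four vertices. -/
def P4 : SimpleGraph (Fin 4) := SimpleGraph.fromRel (fun i j => (i : ℕ) + 1 = (j : ℕ))

/-- The cycle on four vertices. -/
def C4 : SimpleGraph (Fin 4) := SimpleGraph.fromRel (fun i j => j = i + 1)

/-- The bowtie: two triangles sharing the vertex `0`. -/
def Bowtie : SimpleGraph (Fin 5) :=
  SimpleGraph.fromRel
    (fun i j => ({i, j} : Set (Fin 5)) ⊆ {0, 1, 2} ∨ ({i, j} : Set (Fin 5)) ⊆ {0, 3, 4})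

/-- The disjoint union of two edges. -/
def TwoK2 : SimpleGraph (Fin 4) :=
  SimpleGraph.fromRel (fun i j => (i = 0 ∧ j = 1) ∨ (i = 2 ∧ j = 3))

/-- `x` and `y` are white and lie in the same component of `G - B`. -/
def whiteConn (G : SimpleGraph V) (B : Set V) (x y : V) : Prop :=
  ∃ (hx : x ∈ Bᶜ) (hy : y ∈ Bᶜ), (G.induce Bᶜ).Reachable ⟨x, hx⟩ ⟨y, hy⟩

/-- One simultaneous round of positive semidefinite zero forcing. -/
def psdStep (G : SimpleGraph V) (B : Set V) : Set V :=
  B ∪ {w | w ∉ B ∧ ∃ u ∈ B, G.Adj u w ∧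
    ∀ x, G.Adj u x → x ∉ B → whiteConn G B x w → x = w}

/-- `B` is a PSD zero forcing set of `G`. -/
def IsPSDSet (G : SimpleGraph V) (B : Set V) : Prop :=
  ∃ t, (psdStep G)^[t] B = Set.univ

/-- PSD propagation time. -/
noncomputable def psdPt (G : SimpleGraph V) (B : Set V) : ℕ :=
  sInf {t | (psdStep G)^[t] B = Set.univ}

/-- PSD throttling number. -/
noncomputable def psdTh (G : SimpleGraph V) : ℕ :=
  sInf {n | ∃ B : Set V, IsPSDSet G B ∧ n = B.ncard + psdPt G B}

/-- The blue set at time `t` when performing exactly the PSD forces in `F`,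
as early as possible. -/
def psdBlueAt (G : SimpleGraph V) (F : Set (V × V)) (B : Set V) : ℕ → Set V
  | 0 => B
  | t + 1 =>
    psdBlueAt G F B t ∪ {w | w ∉ psdBlueAt G F B t ∧ ∃ u ∈ psdBlueAt G F B t,
      (u, w) ∈ F ∧ G.Adj u w ∧
      ∀ x, G.Adj u x → x ∉ psdBlueAt G F B t →
        whiteConn G (psdBlueAt G F B t) x w → x = w}

/-- PSD propagation time of a set of forces `F`. -/
noncomputable def psdPtF (G : SimpleGraph V) (F : Set (V × V)) (B : Set V) : ℕ :=
  sInf {t | psdBlueAt G F B t = Set.univ}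

/-- `F` is a set of PSD forces of `B` in `G` (every vertex outside `B` has a
unique forcer and the forces color the whole graph). -/
def IsPSDForceSet (G : SimpleGraph V) (F : Set (V × V)) (B : Set V) : Prop :=
  (∀ w ∉ B, ∃! u, (u, w) ∈ F) ∧ (∀ p ∈ F, p.2 ∉ B ∧ p.1 ≠ p.2) ∧
    ∃ t, psdBlueAt G F B t = Set.univ

/-- `G'` is obtained from `G` by contracting the edge `uv`, via the
identification map `φ`. -/
def IsEdgeContraction (G : SimpleGraph V) (u v : V) (G' : SimpleGraph W) (φ : V → W) : Prop :=
  Function.Surjective φ ∧ φ u = φ v ∧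
    (∀ x y : V, φ x = φ y → x ≠ y → (x = u ∧ y = v) ∨ (x = v ∧ y = u)) ∧
    (∀ a b : W, G'.Adj a b ↔ a ≠ b ∧ ∃ x y, G.Adj x y ∧ φ x = a ∧ φ y = b)

/-- One round of `⌊Z₊⌋` forcing (PSD forcing with hopping); a state consists of
the blue set together with, for each vertex, the set of white vertices of
components with respect to which it is inactive. -/
def zpfRound (G : SimpleGraph V) (s s' : Set V × (V → Set V)) : Prop :=
  ∃ F : Set (V × V),
    (∀ p ∈ F, p.1 ∈ s.1 ∧ p.2 ∉ s.1 ∧ p.2 ∉ s.2 p.1 ∧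
      ∀ x, G.Adj p.1 x → x ∉ s.1 → whiteConn G s.1 x p.2 → x = p.2) ∧
    (∀ p ∈ F, ∀ q ∈ F, p.2 = q.2 → p = q) ∧
    (∀ p ∈ F, ∀ q ∈ F, p.1 = q.1 → whiteConn G s.1 p.2 q.2 → p = q) ∧
    s'.1 = s.1 ∪ {w | ∃ u, (u, w) ∈ F} ∧
    s'.2 = fun u => s.2 u ∪ {x | ∃ w, (u, w) ∈ F ∧ whiteConn G s.1 x w}

/-- From state `s` every vertex can be colored blue in `t` rounds of `⌊Z₊⌋` forcing. -/
def zpfReach (G : SimpleGraph V) : ℕ → Set V × (V → Set V) → Prop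
  | 0, s => s.1 = Set.univ
  | t + 1, s => ∃ s', zpfRound G s s' ∧ zpfReach G t s'

/-- Throttling number for the minor monotone floor of PSD zero forcing. -/
noncomputable def zpfTh (G : SimpleGraph V) : ℕ :=
  sInf {n | ∃ (B : Set V) (t : ℕ), zpfReach G t (B, fun _ => ∅) ∧ n = B.ncard + t}

/-- `G` is an `a`-accelerator. -/
def IsAccelerator (G : SimpleGraph V) (a : ℕ) : Prop :=
  ∃ S T : Set V, S ∩ T = ∅ ∧ S ∪ T = Set.univ ∧ S.ncard = a + 1 ∧ T.ncard = a + 1 ∧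
    ∃ f : V → V, Set.BijOn f S T ∧ ∀ s ∈ S, ∀ t ∈ T, (G.Adj s t ↔ f s = t)

/-- The sets `S i`, `T i` witness that `G` is an `(a 0, …, a (r-1))`-accelerator graph. -/
def MultiAccelWitness (G : SimpleGraph V) {r : ℕ} (a : Fin r → ℕ)
    (S T : Fin r → Set V) : Prop :=
  (⋃ i, S i ∪ T i) = Set.univ ∧
  (∀ i, (S i).ncard = a i + 1) ∧ (∀ i, (T i).ncard = a i + 1) ∧
  (∀ i j, i ≠ j → S i ∩ S j = ∅) ∧
  (∀ i j, i ≠ j → T i ∩ T j = ∅) ∧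
  (∀ i j : Fin r, (i : ℕ) + 1 ≠ (j : ℕ) → T i ∩ S j = ∅) ∧
  (∀ i, ∃ f : V → V, Set.BijOn f (S i) (T i) ∧
    ∀ s ∈ S i, ∀ t ∈ T i, (G.Adj s t ↔ f s = t)) ∧
  (∀ u v, G.Adj u v →
    (∃ i, (u ∈ S i ∧ v ∈ T i) ∨ (v ∈ S i ∧ u ∈ T i) ∨
      (u ∈ S i ∧ v ∈ S i) ∨ (u ∈ T i ∧ v ∈ T i)) ∨
    (∃ i j : Fin r, j < i ∧
      ((u ∈ S i ∧ (∀ p : Fin r, (p : ℕ) + 1 = (i : ℕ) → u ∉ T p) ∧ v ∈ S j ∪ T j) ∨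
       (v ∈ S i ∧ (∀ p : Fin r, (p : ℕ) + 1 = (i : ℕ) → v ∉ T p) ∧ u ∈ S j ∪ T j)))) ∧
  (∀ i j : Fin r, (i : ℕ) + 1 = (j : ℕ) → ∀ s ∈ S j, ∃ t ∈ T i, G.Adj s t)

/-- `X` belongs to the family `𝒢ₖ`: it is an `(a₁,…,a_r)`-accelerator graph for
some composition `a₁ + ⋯ + a_r = k + 1`. -/
def InAccelFamily (k : ℕ) (X : SimpleGraph α) : Prop :=
  ∃ (r : ℕ) (a : Fin r → ℕ) (S T : Fin r → Set α),
    1 ≤ r ∧ (∀ i, 1 ≤ a i) ∧ (∑ i, a i) = k + 1 ∧ MultiAccelWitness X a S T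

/-- `G` is a minor of `H` (branch set definition). -/
def IsMinor (G : SimpleGraph V) (H : SimpleGraph W) : Prop :=
  ∃ f : V → Set W, (∀ v, (f v).Nonempty) ∧ (Pairwise fun u v => Disjoint (f u) (f v)) ∧
    (∀ v, (H.induce (f v)).Connected) ∧
    ∀ u v, G.Adj u v → ∃ x ∈ f u, ∃ y ∈ f v, H.Adj x y

/-- The complete `k`-ary tree of height `b`, with vertices the lists over
`Fin k` of length at most `b` (children are obtained by prepending a letter). -/
def kAryTree (k b : ℕ) : SimpleGraph {l : List (Fin k) // l.length ≤ b} :=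
  SimpleGraph.fromRel
    (fun x y => ∃ a : Fin k, (x : List (Fin k)) = a :: (y : List (Fin k)))

/-- `G` is obtained from `K_a □ T_{k,b}` by contracting tree edges and/or
deleting complete edges, via the quotient map `φ`. -/
def ObtainedByCTDC {a k b : ℕ} (G : SimpleGraph V)
    (φ : Fin a × {l : List (Fin k) // l.length ≤ b} → V) : Prop :=
  Function.Surjective φ ∧
  (∀ p q, φ p = φ q → p.1 = q.1 ∧
    Relation.ReflTransGen
      (fun x y => φ x = φ y ∧ x.1 = y.1 ∧ (kAryTree k b).Adj x.2 y.2) p q) ∧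
  (∀ p q, p.1 = q.1 → (kAryTree k b).Adj p.2 q.2 → φ p ≠ φ q → G.Adj (φ p) (φ q)) ∧
  (∀ u v, G.Adj u v → ∃ p q, φ p = u ∧ φ q = v ∧
    ((p.1 = q.1 ∧ (kAryTree k b).Adj p.2 q.2) ∨ (p.2 = q.2 ∧ p.1 ≠ q.1)))


section Stmt19Aux

variable {V₀ W₀ : Type*}

/-- From reachability in an induced subgraph, get a walk staying in the set. -/
lemma exists_walk_of_induce_reachable {G : SimpleGraph W₀} {s : Set W₀} {x y : W₀}
    (hx : x ∈ s) (hy : y ∈ s) (h : (G.induce s).Reachable ⟨x, hx⟩ ⟨y, hy⟩) :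
    ∃ p : G.Walk x y, ∀ z ∈ p.support, z ∈ s := by
  obtain ⟨q⟩ := h
  refine ⟨q.map (Embedding.induce s).toHom, ?_⟩
  intro z hz
  change z ∈ (q.map (Embedding.induce s).toHom).support at hz
  rw [Walk.support_map] at hz
  obtain ⟨⟨z', hz'⟩, -, rfl⟩ := List.mem_map.mp hz
  exact hz'

/-- In an acyclic graph, every path is a geodesic. -/
lemma path_length_le_of_isAcyclic {G : SimpleGraph W₀} (hG : G.IsAcyclic) {a b : W₀}
    {p q : G.Walk a b} (hp : p.IsPath) : p.length ≤ q.length := by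
  classical
  have h := isAcyclic_iff_path_unique.mp hG ⟨p, hp⟩ ⟨q.bypass, q.bypass_isPath⟩
  have h' : p = q.bypass := congrArg Subtype.val h
  rw [h']
  exact q.length_bypass_le

/-- In an acyclic graph, every white neighbor of a blue vertex gets PSD forced. -/
lemma adj_mem_psdStep {G : SimpleGraph W₀} (hG : G.IsAcyclic) {B : Set W₀} {u w : W₀}
    (hu : u ∈ B) (huw : G.Adj u w) : w ∈ psdStep G B := by
  classical
  by_cases hw : w ∈ B
  · exact Set.mem_union_left _ hw
  refine Set.mem_union_right _ ⟨hw, u, hu, huw, ?_⟩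
  intro x hux hxB hconn
  by_contra hne
  obtain ⟨hx', hw', hr⟩ := hconn
  obtain ⟨p, hp⟩ := exists_walk_of_induce_reachable hx' hw' hr
  have hpath2 : (Walk.cons hux.symm (Walk.cons huw Walk.nil)).IsPath := by
    rw [Walk.isPath_def]
    simp only [Walk.support_cons, Walk.support_nil, List.nodup_cons, List.mem_cons,
      List.mem_singleton, List.not_mem_nil, not_false_iff, List.nodup_nil, and_true]
    refine ⟨?_, ?_⟩
    · rintro (rfl | (rfl | h))
      · exact hxB hu
      · exact hne rfl
      · exact h.elim
    · rintro (rfl | h)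
      · exact hw hu
      · exact h.elim
  have huniq := isAcyclic_iff_path_unique.mp hG ⟨p.bypass, p.bypass_isPath⟩ ⟨_, hpath2⟩
  have hval : p.bypass = Walk.cons hux.symm (Walk.cons huw Walk.nil) :=
    congrArg Subtype.val huniq
  have humem : u ∈ p.bypass.support := by
    rw [hval]; simp [Walk.support_cons]
  exact hp u (p.support_bypass_subset humem) hu

lemma subset_psdStep (G : SimpleGraph W₀) (B : Set W₀) : B ⊆ psdStep G B :=
  Set.subset_union_left

lemma iterate_psdStep_mono (G : SimpleGraph W₀) (B : Set W₀) {m n : ℕ} (h : m ≤ n) :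
    (psdStep G)^[m] B ⊆ (psdStep G)^[n] B := by
  obtain ⟨k, rfl⟩ := Nat.exists_eq_add_of_le h
  clear h
  induction k with
  | zero => exact fun a ha => ha
  | succ k ih =>
    have : m + (k + 1) = (m + k) + 1 := by omega
    rw [this, Function.iterate_succ_apply']
    exact ih.trans (subset_psdStep _ _)

/-- Anything forced in `t` rounds is within distance `t` of `B`. -/
lemma exists_walk_of_mem_iterate {G : SimpleGraph W₀} {B : Set W₀} :
    ∀ (t : ℕ) (v : W₀), v ∈ (psdStep G)^[t] B → ∃ b ∈ B, ∃ p : G.Walk b v, p.length ≤ t := by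
  intro t
  induction t with
  | zero => intro v hv; exact ⟨v, hv, Walk.nil, le_rfl⟩
  | succ t ih =>
    intro v hv
    rw [Function.iterate_succ_apply'] at hv
    rcases hv with hv | ⟨-, u, hu, huv, -⟩
    · obtain ⟨b, hb, p, hp⟩ := ih v hv
      exact ⟨b, hb, p, hp.trans (Nat.le_succ t)⟩
    · obtain ⟨b, hb, p, hp⟩ := ih u hu
      refine ⟨b, hb, p.concat huv, ?_⟩
      rw [Walk.length_concat]; omega

/-- In an acyclic graph, everything within distance `t` of `B` is forced
in `t` rounds. -/
lemma mem_iterate_of_walk {G : SimpleGraph W₀} (hG : G.IsAcyclic) {B : Set W₀}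
    {b v : W₀} (hb : b ∈ B) (p : G.Walk b v) {t : ℕ} (hp : p.length ≤ t) :
    v ∈ (psdStep G)^[t] B := by
  have key : ∀ {b v : W₀} (p : G.Walk b v), b ∈ B → v ∈ (psdStep G)^[p.length] B := by
    intro b v p
    induction p using Walk.concatRec with
    | Hnil => intro hb; simpa using hb
    | Hconcat q h ih =>
      intro hb
      rw [Walk.length_concat, Function.iterate_succ_apply']
      exact adj_mem_psdStep hG (ih hb) h
  exact iterate_psdStep_mono G B hp (key p hb)

/-- First entry of a path into a set `s`. -/
lemma exists_first_entry {G : SimpleGraph W₀} {s : Set W₀} :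
    ∀ {b x₀ : W₀} (q : G.Walk b x₀), q.IsPath → x₀ ∈ s →
      ∃ z ∈ s, ∃ qq : G.Walk b z, qq.IsPath ∧ qq.support ⊆ q.support ∧
        ∀ y ∈ qq.support, y ∈ s → y = z := by
  intro b x₀ q
  induction q with
  | nil =>
    intro _ hx
    exact ⟨_, hx, Walk.nil, Walk.IsPath.nil, List.Subset.refl _, fun y hy _ => by simpa using hy⟩
  | @cons u c x₀ h q ih =>
    intro hq hx
    by_cases hu : u ∈ s
    · refine ⟨u, hu, Walk.nil, Walk.IsPath.nil, ?_, fun y hy _ => by simpa using hy⟩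
      intro y hy
      simp only [Walk.support_nil, List.mem_singleton] at hy
      subst hy
      rw [Walk.support_cons]
      exact List.mem_cons_self
    · obtain ⟨z, hz, qq, hqqp, hqqsub, hqqlast⟩ := ih hq.of_cons hx
      have husup : u ∉ qq.support := fun hmem =>
        ((Walk.cons_isPath_iff h q).mp hq).2 (hqqsub hmem)
      refine ⟨z, hz, Walk.cons h qq, ?_, ?_, ?_⟩
      · exact (Walk.cons_isPath_iff h qq).mpr ⟨hqqp, husup⟩
      · intro y hy
        rw [Walk.support_cons] at hy
        rw [Walk.support_cons]
        rcases List.mem_cons.mp hy with rfl | hy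
        · exact List.mem_cons_self
        · exact List.mem_cons_of_mem _ (hqqsub hy)
      · intro y hy hys
        rw [Walk.support_cons] at hy
        rcases List.mem_cons.mp hy with rfl | hy
        · exact absurd hys hu
        · exact hqqlast y hy hys

end Stmt19Aux

section Stmt19Minor

variable {V : Type*} {W : Type*} (T' : SimpleGraph V) (T : SimpleGraph W)
  (f : V → Set W)

variable {T' T f}

/-- Union of branch sets. -/
private def bU (f : V → Set W) : Set W := ⋃ v, f v

lemma mem_bU {v : V} {x : W} (hx : x ∈ f v) : x ∈ bU f :=
  Set.mem_iUnion.mpr ⟨v, hx⟩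

lemma branch_eq (hdisj : Pairwise fun u v => Disjoint (f u) (f v)) {c d : V} {x : W}
    (hc : x ∈ f c) (hd : x ∈ f d) : c = d := by
  by_contra h
  exact Set.disjoint_left.mp (hdisj h) hc hd

/-- A walk between branch sets staying in the union, whose edges are all inside
branch sets or between branch sets of `T'`-adjacent vertices. -/
lemma exists_branch_walk
    (hconn : ∀ v, (T.induce (f v)).Connected)
    (hadj : ∀ u v, T'.Adj u v → ∃ x ∈ f u, ∃ y ∈ f v, T.Adj x y)
    {a b : V} (hr : T'.Reachable a b) :
    ∀ x ∈ f a, ∀ y ∈ f b, ∃ p : T.Walk x y,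
      (∀ z ∈ p.support, z ∈ bU f) ∧
      (∀ e ∈ p.edges, ∃ c d : V, (c = d ∨ T'.Adj c d) ∧ ∀ w ∈ e, w ∈ f c ∪ f d) := by
  obtain ⟨q⟩ := hr
  induction q with
  | @nil a =>
    intro x hx y hy
    obtain ⟨p, hp⟩ := exists_walk_of_induce_reachable hx hy ((hconn a).preconnected _ _)
    refine ⟨p, fun z hz => mem_bU (hp z hz), ?_⟩
    intro e he
    refine ⟨a, a, Or.inl rfl, ?_⟩
    induction e using Sym2.inductionOn with
    | hf s t =>
      intro w hw
      rcases Sym2.mem_iff.mp hw with rfl | rfl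
      · exact Or.inl (hp w (Walk.fst_mem_support_of_mem_edges p he))
      · exact Or.inl (hp w (Walk.snd_mem_support_of_mem_edges p he))
  | @cons a c b h q ih =>
    intro x hx y hy
    obtain ⟨x₁, hx₁, y₁, hy₁, hxy₁⟩ := hadj a c h
    obtain ⟨p₁, hp₁⟩ := exists_walk_of_induce_reachable hx hx₁ ((hconn a).preconnected _ _)
    obtain ⟨p₂, hp₂sup, hp₂edge⟩ := ih y₁ hy₁ y hy
    refine ⟨p₁.append (Walk.cons hxy₁ p₂), ?_, ?_⟩
    · intro z hz
      rw [Walk.support_append] at hz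
      rcases List.mem_append.mp hz with hz | hz
      · exact mem_bU (hp₁ z hz)
      · have hz' : z ∈ p₂.support := by
          rwa [Walk.support_cons, List.tail_cons] at hz
        exact hp₂sup z hz'
    · intro e he
      rw [Walk.edges_append] at he
      rcases List.mem_append.mp he with he | he
      · refine ⟨a, a, Or.inl rfl, ?_⟩
        induction e using Sym2.inductionOn with
        | hf s t =>
          intro w hw
          rcases Sym2.mem_iff.mp hw with rfl | rfl
          · exact Or.inl (hp₁ w (Walk.fst_mem_support_of_mem_edges p₁ he))
          · exact Or.inl (hp₁ w (Walk.snd_mem_support_of_mem_edges p₁ he))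
      · rw [Walk.edges_cons] at he
        rcases List.mem_cons.mp he with rfl | he
        · refine ⟨a, c, Or.inr h, ?_⟩
          intro w hw
          rcases Sym2.mem_iff.mp hw with rfl | rfl
          · exact Or.inl hx₁
          · exact Or.inr hy₁
        · exact hp₂edge e he

/-- If two branch sets contain adjacent vertices of the tree `T`, the
corresponding vertices are adjacent in `T'`. -/
lemma lift_adj (hT' : T'.Connected) (hT : T.IsTree)
    (hdisj : Pairwise fun u v => Disjoint (f u) (f v))
    (hconn : ∀ v, (T.induce (f v)).Connected)
    (hadj : ∀ u v, T'.Adj u v → ∃ x ∈ f u, ∃ y ∈ f v, T.Adj x y)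
    {a b : V} {x y : W} (hx : x ∈ f a) (hy : y ∈ f b) (hab : a ≠ b)
    (hxy : T.Adj x y) : T'.Adj a b := by
  by_contra hnadj
  obtain ⟨p, -, hedge⟩ :=
    exists_branch_walk hconn hadj (hT'.preconnected b a) y hy x hx
  have hne : ∀ e ∈ p.edges, e ∉ ({s(x, y)} : Set (Sym2 W)) := by
    intro e he hmem
    rw [Set.mem_singleton_iff] at hmem
    subst hmem
    obtain ⟨c, d, hcd, hmem⟩ := hedge _ he
    have hxm : x ∈ f c ∪ f d := hmem x (Sym2.mem_iff.mpr (Or.inl rfl))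
    have hym : y ∈ f c ∪ f d := hmem y (Sym2.mem_iff.mpr (Or.inr rfl))
    rcases hxm with hxc | hxd
    · have hca : c = a := branch_eq hdisj hxc hx
      rcases hym with hyc | hyd
      · exact hab (hca.symm.trans (branch_eq hdisj hyc hy))
      · have hdb : d = b := branch_eq hdisj hyd hy
        rcases hcd with hcd | hcd
        · exact hab (hca ▸ hdb ▸ hcd)
        · exact hnadj (hca ▸ hdb ▸ hcd)
    · have hda : d = a := branch_eq hdisj hxd hx
      rcases hym with hyc | hyd
      · have hcb : c = b := branch_eq hdisj hyc hy
        rcases hcd with hcd | hcd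
        · exact hab (hda ▸ hcb ▸ hcd).symm
        · exact hnadj ((hcb ▸ hda ▸ hcd).symm)
      · exact hab ((branch_eq hdisj hxd hx).symm.trans (branch_eq hdisj hyd hy))
  have hbridge := (isAcyclic_iff_forall_adj_isBridge.mp hT.IsAcyclic) hxy
  rw [isBridge_iff] at hbridge
  exact hbridge ((p.toDeleteEdges _ hne).reverse.reachable)

/-- Project a walk in the union of branch sets to a walk in `T'`. -/
lemma quotient_walk (hT' : T'.Connected) (hT : T.IsTree)
    (hdisj : Pairwise fun u v => Disjoint (f u) (f v))
    (hconn : ∀ v, (T.induce (f v)).Connected)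
    (hadj : ∀ u v, T'.Adj u v → ∃ x ∈ f u, ∃ y ∈ f v, T.Adj x y)
    (ρ : W → V) (hρ : ∀ w ∈ bU f, w ∈ f (ρ w)) :
    ∀ {x y : W} (p : T.Walk x y), (∀ z ∈ p.support, z ∈ bU f) →
      ∃ q : T'.Walk (ρ x) (ρ y), q.length ≤ p.length := by
  intro x y p
  induction p with
  | nil => exact fun _ => ⟨Walk.nil, le_rfl⟩
  | @cons x c y h p ih =>
    intro hsup
    have hx : x ∈ bU f := hsup x (by rw [Walk.support_cons]; exact List.mem_cons_self)
    have hc : c ∈ bU f := hsup c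
      (by rw [Walk.support_cons]; exact List.mem_cons_of_mem _ p.start_mem_support)
    obtain ⟨q, hq⟩ := ih
      (fun z hz => hsup z (by rw [Walk.support_cons]; exact List.mem_cons_of_mem _ hz))
    by_cases he : ρ x = ρ c
    · refine ⟨q.copy he.symm rfl, ?_⟩
      rw [Walk.length_copy, Walk.length_cons]
      omega
    · refine ⟨Walk.cons (lift_adj hT' hT hdisj hconn hadj (hρ x hx) (hρ c hc) he h) q, ?_⟩
      rw [Walk.length_cons, Walk.length_cons]
      omega

/-- The union of branch sets is connected via walks staying inside it. -/
lemma bU_reach (hT' : T'.Connected)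
    (hconn : ∀ v, (T.induce (f v)).Connected)
    (hadj : ∀ u v, T'.Adj u v → ∃ x ∈ f u, ∃ y ∈ f v, T.Adj x y)
    (ρ : W → V) (hρ : ∀ w ∈ bU f, w ∈ f (ρ w)) :
    ∀ x ∈ bU f, ∀ y ∈ bU f, ∃ p : T.Walk x y, ∀ z ∈ p.support, z ∈ bU f := by
  intro x hx y hy
  obtain ⟨p, hp, -⟩ := exists_branch_walk hconn hadj
    (hT'.preconnected (ρ x) (ρ y)) x (hρ x hx) y (hρ y hy)
  exact ⟨p, hp⟩

/-- Tree projection onto the union of branch sets. -/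
lemma proj_exists (hT : T.IsTree) (hT' : T'.Connected)
    (hconn : ∀ v, (T.induce (f v)).Connected)
    (hadj : ∀ u v, T'.Adj u v → ∃ x ∈ f u, ∃ y ∈ f v, T.Adj x y)
    (ρ : W → V) (hρ : ∀ w ∈ bU f, w ∈ f (ρ w)) (hUne : (bU f).Nonempty) :
    ∀ b : W, ∃ z ∈ bU f, ∀ u ∈ bU f, ∀ p : T.Walk b u,
      ∃ r : T.Walk z u, (∀ w ∈ r.support, w ∈ bU f) ∧ r.length ≤ p.length := by
  classical
  intro b
  obtain ⟨x₀, hx₀⟩ := hUne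
  obtain ⟨q0⟩ := hT.isConnected.preconnected b x₀
  obtain ⟨z, hz, qq, hqqp, -, hqqlast⟩ :=
    exists_first_entry (s := bU f) q0.bypass q0.bypass_isPath hx₀
  refine ⟨z, hz, ?_⟩
  intro u hu p
  obtain ⟨r0, hr0⟩ := bU_reach hT' hconn hadj ρ hρ z hz u hu
  have hrsup : ∀ w ∈ r0.bypass.support, w ∈ bU f :=
    fun w hw => hr0 w (r0.support_bypass_subset hw)
  have happ : (qq.append r0.bypass).IsPath := by
    rw [Walk.isPath_def, Walk.support_append]
    refine List.Nodup.append hqqp.support_nodup ?_ ?_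
    · have := r0.bypass_isPath.support_nodup
      rw [r0.bypass.support_eq_cons] at this
      exact (List.nodup_cons.mp this).2
    · intro y hy1 hy2
      have hyU : y ∈ bU f := hrsup y (List.mem_of_mem_tail hy2)
      have hyz : y = z := hqqlast y hy1 hyU
      subst hyz
      have hnd := r0.bypass_isPath.support_nodup
      rw [r0.bypass.support_eq_cons] at hnd
      exact (List.nodup_cons.mp hnd).1 hy2
  have hlen : (qq.append r0.bypass).length ≤ p.length :=
    path_length_le_of_isAcyclic hT.IsAcyclic happ
  rw [Walk.length_append] at hlen
  exact ⟨r0.bypass, hrsup, by omega⟩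

end Stmt19Minor

/-- The PSD throttling number is minor monotone on trees. -/
theorem stmt19 {V W : Type*} [Fintype V] [Fintype W]
    (T' : SimpleGraph V) (T : SimpleGraph W)
    (hT' : T'.IsTree) (hT : T.IsTree) (hm : IsMinor T' T) :
    psdTh T' ≤ psdTh T := by
  classical
  obtain ⟨f, hne, hdisj, hconn, hadj⟩ := hm
  have hVne : Nonempty V := hT'.isConnected.nonempty
  have hUne : (bU f).Nonempty := by
    obtain ⟨x, hx⟩ := hne (Classical.arbitrary V)
    exact ⟨x, mem_bU hx⟩
  set ρ : W → V := fun w => if h : ∃ v, w ∈ f v then h.choose else Classical.arbitrary V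
    with hρdef
  have hρ : ∀ w ∈ bU f, w ∈ f (ρ w) := by
    intro w hw
    obtain ⟨v, hv⟩ := Set.mem_iUnion.mp hw
    have hex : ∃ v, w ∈ f v := ⟨v, hv⟩
    have : ρ w = hex.choose := dif_pos hex
    rw [this]
    exact hex.choose_spec
  have hρeq : ∀ {w v}, w ∈ f v → ρ w = v :=
    fun hw => branch_eq hdisj (hρ _ (mem_bU hw)) hw
  have hTset : psdTh T ∈ {n | ∃ B : Set W, IsPSDSet T B ∧ n = B.ncard + psdPt T B} :=
    Nat.sInf_mem ⟨_, ⟨Set.univ, ⟨0, rfl⟩, rfl⟩⟩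
  obtain ⟨B, hBps, hEq⟩ := hTset
  have hit : (psdStep T)^[psdPt T B] B = Set.univ := Nat.sInf_mem hBps
  set t := psdPt T B with ht
  have hwalks : ∀ u : W, ∃ b ∈ B, ∃ p : T.Walk b u, p.length ≤ t :=
    fun u => exists_walk_of_mem_iterate t u (hit ▸ Set.mem_univ u)
  choose z hzU hz using proj_exists hT hT'.isConnected hconn hadj ρ hρ hUne
  set B' := (fun b => ρ (z b)) '' B with hB'
  have hcard : B'.ncard ≤ B.ncard := Set.ncard_image_le B.toFinite
  have hcov : ∀ v : V, ∃ b' ∈ B', ∃ q : T'.Walk b' v, q.length ≤ t := by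
    intro v
    obtain ⟨x, hx⟩ := hne v
    obtain ⟨b, hb, p, hp⟩ := hwalks x
    obtain ⟨r, hrU, hrlen⟩ := hz b x (mem_bU hx) p
    obtain ⟨q, hq⟩ := quotient_walk hT'.isConnected hT hdisj hconn hadj ρ hρ r hrU
    have hρx : ρ x = v := hρeq hx
    exact ⟨ρ (z b), ⟨b, hb, rfl⟩, q.copy rfl hρx, by rw [Walk.length_copy]; omega⟩
  have huniv : (psdStep T')^[t] B' = Set.univ := by
    apply Set.eq_univ_of_forall
    intro v
    obtain ⟨b', hb', q, hql⟩ := hcov v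
    exact mem_iterate_of_walk hT'.IsAcyclic hb' q hql
  have hPS' : IsPSDSet T' B' := ⟨t, huniv⟩
  have hle : psdPt T' B' ≤ t := Nat.sInf_le huniv
  calc psdTh T' ≤ B'.ncard + psdPt T' B' := Nat.sInf_le ⟨B', hPS', rfl⟩
    _ ≤ B.ncard + t := add_le_add hcard hle
    _ = psdTh T := hEq.symm

end ThrotPaper
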